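/- Let x, y ∈ ℝ with x ≠ 0 and y ≠ 0. Then the cubic polynomial P(α) = α³ + 2x²α² + (x² − y²)α − x²y² has exactly one nonnegative real root, which is moreover strictly positive. -/

import Mathlib

/-!
Writing `c = x²` and `d = y²`, the cubic is `P(α) = α³ + 2cα² + (c - d)α - cd`.
For `c > 0` the quotient `P(α) / (α + c)` is strictly increasing on `[0, ∞)`, because
`P(b)(a + c) - P(a)(b + c) = (b - a)(ab(a + b + 2c) + c(a² + ab + b² + 2c(a + b) + c))`.
Hence `P` has at most one nonnegative root; since `P(0) = -cd < 0 < P(d + 1)`, the intermediate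
value theorem provides one, and it is not `0`.
-/

open Set

def harveyLawsonCubic (c d α : ℝ) : ℝ :=
  α ^ 3 + 2 * c * α ^ 2 + (c - d) * α - c * d

namespace harveyLawsonCubic

variable {c d : ℝ}

theorem apply_zero : harveyLawsonCubic c d 0 = -(c * d) := by
  simp [harveyLawsonCubic]

theorem continuous : Continuous (harveyLawsonCubic c d) := by
  unfold harveyLawsonCubic
  fun_prop

theorem div_strictMonoOn (hc : 0 < c) :
    StrictMonoOn (fun α ↦ harveyLawsonCubic c d α / (α + c)) (Ici 0) := by
  intro a (ha : 0 ≤ a) b (hb : 0 ≤ b) hab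
  rw [div_lt_div_iff₀ (by positivity) (by positivity)]
  have hK : 0 < a * b * (a + b + 2 * c) + c * (a ^ 2 + a * b + b ^ 2 + 2 * c * (a + b) + c) := by
    positivity
  have key : harveyLawsonCubic c d b * (a + c) - harveyLawsonCubic c d a * (b + c)
      = (b - a) *
        (a * b * (a + b + 2 * c) + c * (a ^ 2 + a * b + b ^ 2 + 2 * c * (a + b) + c)) := by
    unfold harveyLawsonCubic
    ring
  linarith [mul_pos (sub_pos.mpr hab) hK]

theorem eq_of_eq_zero (hc : 0 < c) {a b : ℝ} (ha : 0 ≤ a) (hb : 0 ≤ b)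
    (hPa : harveyLawsonCubic c d a = 0) (hPb : harveyLawsonCubic c d b = 0) : a = b :=
  (div_strictMonoOn (d := d) hc).injOn ha hb (by simp only [hPa, hPb, zero_div])

theorem pos_of_eq_zero (hc : 0 < c) (hd : 0 < d) {a : ℝ} (ha : 0 ≤ a)
    (hPa : harveyLawsonCubic c d a = 0) : 0 < a := by
  refine ha.lt_of_ne fun h ↦ ?_
  rw [← h, apply_zero, neg_eq_zero] at hPa
  exact (mul_pos hc hd).ne' hPa

theorem exists_nonneg_eq_zero (hc : 0 < c) (hd : 0 < d) :
    ∃ α, 0 ≤ α ∧ harveyLawsonCubic c d α = 0 := by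
  have hB : harveyLawsonCubic c d (d + 1)
      = (d + 1) * (d ^ 2 + d + 1) + c * (2 * (d + 1) ^ 2 + 1) := by
    unfold harveyLawsonCubic
    ring
  have h0 : harveyLawsonCubic c d 0 ≤ 0 := by
    rw [apply_zero]
    exact neg_nonpos.mpr (mul_pos hc hd).le
  have h1 : 0 ≤ harveyLawsonCubic c d (d + 1) := by
    rw [hB]
    positivity
  obtain ⟨α, ⟨hα, -⟩, hroot⟩ :=
    intermediate_value_Icc (by linarith) continuous.continuousOn ⟨h0, h1⟩
  exact ⟨α, hα, hroot⟩

end harveyLawsonCubic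

theorem cubic_unique_nonneg_root (x y : ℝ) (hx : x ≠ 0) (hy : y ≠ 0) :
    (∃! α : ℝ, 0 ≤ α ∧
      α ^ 3 + 2 * x ^ 2 * α ^ 2 + (x ^ 2 - y ^ 2) * α - x ^ 2 * y ^ 2 = 0) ∧
    (∀ α : ℝ, 0 ≤ α →
      α ^ 3 + 2 * x ^ 2 * α ^ 2 + (x ^ 2 - y ^ 2) * α - x ^ 2 * y ^ 2 = 0 → 0 < α) := by
  have hc : 0 < x ^ 2 := by positivity
  have hd : 0 < y ^ 2 := by positivity
  change (∃! α : ℝ, 0 ≤ α ∧ harveyLawsonCubic (x ^ 2) (y ^ 2) α = 0) ∧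
    ∀ α : ℝ, 0 ≤ α → harveyLawsonCubic (x ^ 2) (y ^ 2) α = 0 → 0 < α
  obtain ⟨α, hα, hroot⟩ := harveyLawsonCubic.exists_nonneg_eq_zero hc hd
  exact ⟨⟨α, ⟨hα, hroot⟩,
      fun β ⟨hβ, hβroot⟩ ↦ harveyLawsonCubic.eq_of_eq_zero hc hβ hα hβroot hroot⟩,
    fun β hβ hβroot ↦ harveyLawsonCubic.pos_of_eq_zero hc hd hβ hβroot⟩
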